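/- Swapping two adjacent send events of distinct sending processes in a word preserves the channel-compliance property. -/

import Mathlib

/-!
A prefix of the swapped word is a prefix of `u`, or `u` followed by one extra send (which only
extends a send sequence), or it contains both swapped sends. In the last case it has the same
receive sequences as the corresponding prefix of the original word, and, the two sends lying on
different channels, also the same send sequences.
-/

/-- Events: `snd P Q m` is process `P` sending message `m` to `Q`;
    `rcv P Q m` is process `Q` receiving message `m` from `P`. -/
inductive Ev where
  | snd : ℕ → ℕ → ℕ → Ev
  | rcv : ℕ → ℕ → ℕ → Ev
deriving DecidableEq

/-- Message values of send events on channel (P,Q) in w. -/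
def sends (w : List Ev) (P Q : ℕ) : List ℕ :=
  w.filterMap fun e => match e with
    | .snd p q m => if p = P ∧ q = Q then some m else none
    | _ => none

/-- Message values of receive events on channel (P,Q) in w. -/
def recvs (w : List Ev) (P Q : ℕ) : List ℕ :=
  w.filterMap fun e => match e with
    | .rcv p q m => if p = P ∧ q = Q then some m else none
    | _ => none

def channelCompliant (w : List Ev) : Prop :=
  ∀ u, u <+: w → ∀ P Q, recvs u P Q <+: sends u P Q

def complete (w : List Ev) : Prop :=
  ∀ P Q, sends w P Q = recvs w P Q

def bounded (B : ℕ) (w : List Ev) : Prop :=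
  ∀ u, u <+: w → ∀ P Q, (sends u P Q).length ≤ (recvs u P Q).length + B

def halfDuplex (w : List Ev) : Prop :=
  ∀ u, u <+: w → ∀ P Q,
    sends u P Q = recvs u P Q ∨ sends u Q P = recvs u Q P

/-- Send at position i on channel (P,Q) is matched by receive at position j. -/
def Matches (w : List Ev) (P Q i j : ℕ) : Prop :=
  i < j ∧ j < w.length ∧
  (∃ m, w[i]? = some (.snd P Q m) ∧ w[j]? = some (.rcv P Q m)) ∧
  sends (w.take (i+1)) P Q = recvs (w.take (j+1)) P Q

def IsSendAt (w : List Ev) (P Q i : ℕ) : Prop := ∃ m, w[i]? = some (Ev.snd P Q m)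
def IsRcvAt (w : List Ev) (P Q i : ℕ) : Prop := ∃ m, w[i]? = some (Ev.rcv P Q m)
def MatchedAt (w : List Ev) (P Q i : ℕ) : Prop := ∃ j, Matches w P Q i j

/-- The process performing the event. -/
def actor : Ev → ℕ
  | .snd p _ _ => p
  | .rcv _ q _ => q

/-- Projection of a word onto the events of process X. -/
def proj (w : List Ev) (X : ℕ) : List Ev := w.filter (fun e => actor e == X)

/-- Two words induce the same MSC (same per-process orders; with FIFO matching,
    this determines the matching). -/
def sameMSC (w v : List Ev) : Prop := ∀ X, proj w X = proj v X

/-- Existentially B-bounded: some linearisation of msc(w) is B-bounded. -/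
def existBounded (B : ℕ) (w : List Ev) : Prop :=
  ∃ v, channelCompliant v ∧ sameMSC w v ∧ bounded B v

def isSnd : Ev → Prop
  | .snd _ _ _ => True
  | _ => False

def isRcv : Ev → Prop
  | .rcv _ _ _ => True
  | _ => False

/-- Positions i and j lie in the same block of the block decomposition. -/
def SameBlock (blocks : List (List Ev)) (i j : ℕ) : Prop :=
  ∃ t, ((blocks.take t).flatten).length ≤ i ∧ j < ((blocks.take (t+1)).flatten).length

/-- w is k-synchronisable: some linearisation of msc(w) splits into blocks of
    at most k sends followed by at most k receives, with matched pairs co-located. -/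
def kSynchronisable (k : ℕ) (w : List Ev) : Prop :=
  ∃ blocks : List (List Ev),
    channelCompliant blocks.flatten ∧ sameMSC w blocks.flatten ∧
    (∀ b ∈ blocks, ∃ s r, b = s ++ r ∧ s.length ≤ k ∧ r.length ≤ k ∧
      (∀ e ∈ s, isSnd e) ∧ (∀ e ∈ r, isRcv e)) ∧
    (∀ P Q i j, Matches blocks.flatten P Q i j → SameBlock blocks i j)

/-- One step of the indistinguishability relation ∼. -/
inductive Sim1 : List Ev → List Ev → Prop
  | ss (u v : List Ev) (P Q R S m m' : ℕ) (h : P ≠ R) :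
      Sim1 (u ++ Ev.snd P Q m :: Ev.snd R S m' :: v)
           (u ++ Ev.snd R S m' :: Ev.snd P Q m :: v)
  | rr (u v : List Ev) (P Q R S m m' : ℕ) (h : Q ≠ S) :
      Sim1 (u ++ Ev.rcv P Q m :: Ev.rcv R S m' :: v)
           (u ++ Ev.rcv R S m' :: Ev.rcv P Q m :: v)
  | sr (u v : List Ev) (P Q R S m m' : ℕ) (h1 : P ≠ S) (h2 : P ≠ R ∨ Q ≠ S) :
      Sim1 (u ++ Ev.snd P Q m :: Ev.rcv R S m' :: v)
           (u ++ Ev.rcv R S m' :: Ev.snd P Q m :: v)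
  | srSame (u v : List Ev) (P Q m m' : ℕ)
      (h : (recvs u P Q).length < (sends u P Q).length) :
      Sim1 (u ++ Ev.snd P Q m :: Ev.rcv P Q m' :: v)
           (u ++ Ev.rcv P Q m' :: Ev.snd P Q m :: v)

/-- The indistinguishability relation ∼ (finitely many swaps). -/
def Sim : List Ev → List Ev → Prop := Relation.ReflTransGen Sim1

@[simp]
lemma sends_append (a b : List Ev) (P Q : ℕ) :
    sends (a ++ b) P Q = sends a P Q ++ sends b P Q := by
  simp [sends]

@[simp]
lemma recvs_append (a b : List Ev) (P Q : ℕ) :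
    recvs (a ++ b) P Q = recvs a P Q ++ recvs b P Q := by
  simp [recvs]

@[simp]
lemma recvs_nil (P Q : ℕ) : recvs [] P Q = [] := rfl

@[simp]
lemma recvs_snd_cons (p q n : ℕ) (t : List Ev) (P Q : ℕ) :
    recvs (Ev.snd p q n :: t) P Q = recvs t P Q := by
  simp [recvs]

lemma sends_snd_snd_comm {P Q R S : ℕ} (h : P ≠ R ∨ Q ≠ S) (m m' : ℕ) (t : List Ev)
    (X Y : ℕ) :
    sends (Ev.snd P Q m :: Ev.snd R S m' :: t) X Y =
      sends (Ev.snd R S m' :: Ev.snd P Q m :: t) X Y := by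
  simp only [sends, List.filterMap_cons]
  split_ifs <;> simp_all

lemma List.prefix_or_eq_append_of_prefix_append {α : Type*} {w u v : List α}
    (h : w <+: u ++ v) : w <+: u ∨ ∃ t, t <+: v ∧ w = u ++ t := by
  refine (List.prefix_or_prefix_of_prefix h (u.prefix_append v)).imp_right ?_
  rintro ⟨t, rfl⟩
  exact ⟨t, (List.prefix_append_right_inj u).1 h, rfl⟩

/-- swapping two adjacent sends of distinct sending processes
    preserves channel-compliance. -/
theorem swap_sends_preserves_channelCompliant
    (u v : List Ev) (P Q R S m m' : ℕ) (hPR : P ≠ R)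
    (h : channelCompliant (u ++ Ev.snd P Q m :: Ev.snd R S m' :: v)) :
    channelCompliant (u ++ Ev.snd R S m' :: Ev.snd P Q m :: v) := by
  intro w hw X Y
  have hu := h u (u.prefix_append _) X Y
  rcases w.prefix_or_eq_append_of_prefix_append hw with hwu | ⟨t, ht, rfl⟩
  · exact h w (hwu.trans (u.prefix_append _)) X Y
  rcases List.prefix_cons_iff.1 ht with rfl | ⟨t, rfl, ht'⟩
  · simpa using hu
  rcases List.prefix_cons_iff.1 ht' with rfl | ⟨t, rfl, htv⟩
  · simpa using hu.trans (List.prefix_append _ _)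
  have hw' := h (u ++ Ev.snd P Q m :: Ev.snd R S m' :: t) (by simpa using htv) X Y
  simpa [sends_snd_snd_comm (Or.inl hPR)] using hw'
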